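/- Let k ≥ 2 be an integer and let a ∈ (0, 1/k) and c ∈ (0,1) be fixed real numbers. Then for every ε > 0 there exists n₀ = n₀(k, ε) such that for all n ≥ n₀: if f₀^{an}(k,n) ≤ c·C(n,k), then f₀^{an+1}(k,n) ≤ (c + ε)·C(n,k). -/

import Mathlib

/-!
Given a `k`-graph `H` with at least `f₀^{s} + k·C(n-1,k-1)` edges, fix an edge `e`. At most
`k·C(n-1,k-1)` edges meet `e`, so the edges disjoint from `e` still carry a fractional matching of
size `s`, and giving `e` weight `1` enlarges it to size `s + 1`. Hence
`f₀^{s+1}(k,n) ≤ f₀^{s}(k,n) + k·C(n-1,k-1) = f₀^{s}(k,n) + (k²/n)·C(n,k)`, and `k²/n ≤ ε` for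
large `n`.
-/

/-- A fractional matching of a `k`-graph `H` on `Fin m`: weights in `[0,1]`, supported on the
edges, with total weight at each vertex at most `1`. -/
def IsFracMatching {m : ℕ} (H : Finset (Finset (Fin m))) (w : Finset (Fin m) → ℝ) : Prop :=
  (∀ e, 0 ≤ w e ∧ w e ≤ 1) ∧ (∀ e ∉ H, w e = 0) ∧
    ∀ v : Fin m, ∑ e ∈ H.filter (fun e => v ∈ e), w e ≤ 1

/-- `f₀^s(k,n)`: the smallest integer `M` such that every `n`-vertex `k`-graph with at least `M`
edges has a fractional matching of size at least `s`. -/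
noncomputable def f0 (k n : ℕ) (s : ℝ) : ℕ :=
  sInf { M : ℕ | ∀ H : Finset (Finset (Fin n)), H ⊆ Finset.univ.powersetCard k →
    M ≤ H.card → ∃ w : Finset (Fin n) → ℝ, IsFracMatching H w ∧ s ≤ ∑ e ∈ H, w e }

open Finset

lemma card_filter_not_disjoint_le {α : Type*} [Fintype α] [DecidableEq α] {k : ℕ} (hk : 1 ≤ k)
    {H : Finset (Finset α)} (hH : H ⊆ univ.powersetCard k) (e : Finset α) :
    #(H.filter (fun f => ¬ Disjoint f e)) ≤ #e * (Fintype.card α - 1).choose (k - 1) := by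
  have hcover : H.filter (fun f => ¬ Disjoint f e)
      ⊆ e.biUnion (fun v => (univ.powersetCard k).filter ({v} ⊆ ·)) := by
    intro f hf
    obtain ⟨hfH, hfe⟩ := mem_filter.1 hf
    obtain ⟨v, hvf, hve⟩ := not_disjoint_iff.1 hfe
    exact mem_biUnion.2 ⟨v, hve, mem_filter.2 ⟨hH hfH, singleton_subset_iff.2 hvf⟩⟩
  calc #(H.filter (fun f => ¬ Disjoint f e))
      ≤ ∑ v ∈ e, #((univ.powersetCard k).filter ({v} ⊆ ·)) :=
        (card_le_card hcover).trans card_biUnion_le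
    _ = #e * (Fintype.card α - 1).choose (k - 1) := by
        simp only [card_filter_powersetCard_subset _ _ _ (subset_univ _)
          (card_singleton _ ▸ hk), card_singleton, card_univ, sum_const, smul_eq_mul]

namespace IsFracMatching

variable {m : ℕ} {H H' : Finset (Finset (Fin m))} {w : Finset (Fin m) → ℝ}

lemma sum_eq_of_subset (hw : IsFracMatching H' w) (hH' : H' ⊆ H) (p : Finset (Fin m) → Prop)
    [DecidablePred p] : ∑ f ∈ H.filter p, w f = ∑ f ∈ H'.filter p, w f :=
  (sum_subset (filter_subset_filter p hH') fun f hfH hf =>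
    hw.2.1 f fun hfH' => hf (mem_filter.2 ⟨hfH', (mem_filter.1 hfH).2⟩)).symm

lemma add_single {e : Finset (Fin m)} (hw : IsFracMatching H' w) (hH' : H' ⊆ H) (he : e ∈ H)
    (he0 : e.Nonempty) (hdisj : ∀ f ∈ H', Disjoint f e) :
    IsFracMatching H (w + Pi.single e 1) ∧
      ∑ f ∈ H, (w + Pi.single e 1 : Finset (Fin m) → ℝ) f = ∑ f ∈ H', w f + 1 := by
  have heH' : e ∉ H' := fun h => he0.ne_empty (disjoint_self.1 (hdisj e h))
  refine ⟨⟨fun f => ?_, fun f hf => ?_, fun v => ?_⟩, ?_⟩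
  · obtain rfl | hfe := eq_or_ne f e
    · simp [hw.2.1 f heH']
    · simpa [hfe] using hw.1 f
  · have hfe : f ≠ e := by rintro rfl; exact hf he
    simp [hfe, hw.2.1 f fun h => hf (hH' h)]
  · simp only [Pi.add_apply, sum_add_distrib, sum_pi_single', mem_filter,
      hw.sum_eq_of_subset hH' (v ∈ ·)]
    by_cases hv : v ∈ e
    · have hempty : H'.filter (v ∈ ·) = ∅ :=
        filter_false_of_mem fun f hf hvf => disjoint_left.1 (hdisj f hf) hvf hv
      simp [hempty, he, hv]
    · simpa [hv] using hw.2.2 v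
  · have hsum : ∑ f ∈ H, w f = ∑ f ∈ H', w f :=
      (sum_subset hH' fun f _ hf => hw.2.1 f hf).symm
    simp [sum_add_distrib, sum_pi_single', he, hsum]

end IsFracMatching

section

variable {k n : ℕ} {s : ℝ}

lemma f0_le {M : ℕ} (h : ∀ H : Finset (Finset (Fin n)), H ⊆ univ.powersetCard k → M ≤ #H →
      ∃ w, IsFracMatching H w ∧ s ≤ ∑ e ∈ H, w e) :
    f0 k n s ≤ M :=
  Nat.sInf_le h

/-- Too many edges is vacuous, so the infimum defining `f0` is attained. -/
lemma exists_isFracMatching_of_f0_le {H : Finset (Finset (Fin n))}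
    (hH : H ⊆ univ.powersetCard k) (hcard : f0 k n s ≤ #H) :
    ∃ w, IsFracMatching H w ∧ s ≤ ∑ e ∈ H, w e := by
  refine (Nat.sInf_mem ⟨n.choose k + 1, fun H' hH' hcard' => absurd hcard' ?_⟩ :
    f0 k n s ∈ _) H hH hcard
  simpa [Nat.lt_succ_iff] using card_le_card hH'

lemma f0_add_one_le (hk : 1 ≤ k) (hkn : k ≤ n) :
    f0 k n (s + 1) ≤ f0 k n s + k * (n - 1).choose (k - 1) := by
  refine f0_le fun H hH hcard => ?_
  have hchoose : 0 < (n - 1).choose (k - 1) := Nat.choose_pos (by omega)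
  obtain ⟨e, he⟩ : H.Nonempty := card_pos.1 (by nlinarith)
  have hek : #e = k := (mem_powersetCard.1 (hH he)).2
  set H' := H.filter (fun f => Disjoint f e)
  have hmeet := card_filter_not_disjoint_le hk hH e
  rw [hek, Fintype.card_fin] at hmeet
  have hsplit : #H' + #(H.filter (fun f => ¬ Disjoint f e)) = #H :=
    card_filter_add_card_filter_not _
  obtain ⟨w, hw, hws⟩ :=
    exists_isFracMatching_of_f0_le (H := H') (s := s) ((filter_subset _ H).trans hH) (by omega)
  obtain ⟨hw', hsum⟩ := hw.add_single (filter_subset _ H) he (card_pos.1 (by omega))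
    fun f hf => (mem_filter.1 hf).2
  exact ⟨_, hw', by linarith⟩

end

lemma mul_mul_choose_sub_one {n k : ℕ} (hk : 1 ≤ k) (hkn : k ≤ n) :
    n * (k * (n - 1).choose (k - 1)) = k ^ 2 * n.choose k := by
  obtain ⟨n, rfl⟩ := Nat.exists_eq_add_of_le' (hk.trans hkn)
  obtain ⟨k, rfl⟩ := Nat.exists_eq_add_of_le' hk
  rw [Nat.add_sub_cancel, Nat.add_sub_cancel, mul_left_comm, Nat.add_one_mul_choose_eq]
  ring

theorem stmt_10_general (k : ℕ) (hk : 2 ≤ k) (a c : ℝ) (ε : ℝ) (hε : 0 < ε) :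
    ∃ n₀ : ℕ, ∀ n : ℕ, n₀ ≤ n →
      (f0 k n (a * n) : ℝ) ≤ c * (n.choose k : ℝ) →
      (f0 k n (a * n + 1) : ℝ) ≤ (c + ε) * (n.choose k : ℝ) := by
  refine ⟨max k ⌈(k : ℝ) ^ 2 / ε⌉₊, fun n hn hf0 => ?_⟩
  have hkn : k ≤ n := le_of_max_le_left hn
  have hn0 : (0 : ℝ) < n := by exact_mod_cast (by omega : 0 < n)
  have hkε : (k : ℝ) ^ 2 ≤ ε * n := by
    rw [← div_le_iff₀' hε]
    exact (Nat.le_ceil _).trans (by exact_mod_cast le_of_max_le_right hn)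
  have hstep : (f0 k n (a * n + 1) : ℝ) ≤ f0 k n (a * n) + k * (n - 1).choose (k - 1) := by
    exact_mod_cast f0_add_one_le (by omega) hkn
  have hidentity : (n : ℝ) * (k * (n - 1).choose (k - 1)) = k ^ 2 * n.choose k := by
    exact_mod_cast mul_mul_choose_sub_one (by omega) hkn
  have hmeet : (k : ℝ) * (n - 1).choose (k - 1) ≤ ε * n.choose k := by
    refine le_of_mul_le_mul_left ?_ hn0
    rw [hidentity]
    nlinarith [(Nat.cast_nonneg (n.choose k) : (0 : ℝ) ≤ _)]
  linarith

/-- Proposition 3.2 (Kühn–Osthus–Townsend): for fixed `k ≥ 2`, `a ∈ (0,1/k)` and `c ∈ (0,1)`,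
for every `ε > 0` there is `n₀` such that for all `n ≥ n₀`: if `f₀^{an}(k,n) ≤ c·C(n,k)` then
`f₀^{an+1}(k,n) ≤ (c + ε)·C(n,k)`. -/
theorem stmt_10 (k : ℕ) (hk : 2 ≤ k) (a c : ℝ) (ha0 : 0 < a) (ha1 : a < 1 / (k : ℝ))
    (hc0 : 0 < c) (hc1 : c < 1) (ε : ℝ) (hε : 0 < ε) :
    ∃ n₀ : ℕ, ∀ n : ℕ, n₀ ≤ n →
      (f0 k n (a * n) : ℝ) ≤ c * (n.choose k : ℝ) →
      (f0 k n (a * n + 1) : ℝ) ≤ (c + ε) * (n.choose k : ℝ) :=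
  stmt_10_general k hk a c ε hε
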